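/- Let n be a positive integer and let u : ℤ → ℝ be supported on {-n, ..., n}, symmetric (u(-k) = u(k) for all k), normalized so that ∑_{k=-n}^{n} u(k) = 1, and with nonnegative Fourier transform, i.e., û(ξ) = ∑_{k=-n}^{n} u(k) e^{-ikξ} is real and nonnegative for every ξ ∈ ℝ. Then sup over all nonzero f ∈ ℓ²(ℤ) of ‖Δ(f*u)‖₂ / ‖f‖₂ is at least 4/(n+1)². -/

import Mathlib

open scoped BigOperators

/-- Convolution of `f ∈ ℓ²(ℤ)` with a finitely supported kernel `u : ℤ → ℝ`:
`(f*u)(m) = ∑_{k} u(k) f(m-k)`. -/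
noncomputable def conv (u : ℤ → ℝ) (f : ℤ → ℂ) : ℤ → ℂ :=
  fun m => ∑' k : ℤ, (u k : ℂ) * f (m - k)

/-- The `ℓ²`-norm `(∑_{k∈ℤ} |f(k)|²)^{1/2}`. -/
noncomputable def l2norm (f : ℤ → ℂ) : ℝ :=
  Real.sqrt (∑' k : ℤ, ‖f k‖ ^ 2)

/-- The discrete derivative `(∇f)(k) = f(k+1) - f(k)`. -/
def dgrad (f : ℤ → ℂ) : ℤ → ℂ := fun k => f (k + 1) - f k

/-- The discrete Laplacian `(Δf)(k) = f(k+2) - 2f(k+1) + f(k)`. -/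
def dlap (f : ℤ → ℂ) : ℤ → ℂ := fun k => f (k + 2) - 2 * f (k + 1) + f k

/-!
For a plane wave `e_ξ(k) = e^{ikξ}` one has `Δ(e_ξ * u) = û(ξ) (e^{iξ} - 1)² e_ξ`, and truncating `e_ξ`
to longer and longer intervals gives test functions whose ratio tends to `|e^{iξ} - 1|² û(ξ)`. So it
suffices to find `ξ` with `|e^{iξ} - 1|² û(ξ) ≥ 4/N²`, `N = n + 1`.

Since `û` is a trigonometric polynomial of degree `n < N`, the equispaced rule
`∑_{j<N} û(a + 2πj/N) = N u(0)` holds for every `a`. Comparing `a = 0` with `a = π/N` and using `û ≥ 0`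
gives `∑_j û(η_j) ≥ û(0) = 1` at the nodes `η_j = (2j+1)π/N`. On the other hand
`∑_j 4/|e^{iη_j} - 1|² = N²`, by Parseval applied to `∑_{r<N} e^{irη_j} = -2/(e^{iη_j} - 1)`. Hence some
node has `|e^{iη_j} - 1|² û(η_j) ≥ 4/N²`.
-/

open Complex Finset Filter Topology
open scoped Real ComplexConjugate

local notation "ℓ²" => lp (fun _ : ℤ => ℂ) 2

section Translate

theorem memℓp_two_iff_summable_sq {f : ℤ → ℂ} : Memℓp f 2 ↔ Summable fun k => ‖f k‖ ^ 2 := by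
  rw [memℓp_gen_iff (by norm_num)]
  norm_num

theorem l2norm_coe (f : ℓ²) : l2norm f = ‖f‖ := by
  rw [lp.norm_eq_tsum_rpow (by norm_num), l2norm, Real.sqrt_eq_rpow]
  norm_num

theorem Memℓp.comp_sub {f : ℤ → ℂ} (hf : Memℓp f 2) (k : ℤ) : Memℓp (fun m => f (m - k)) 2 :=
  memℓp_two_iff_summable_sq.2 <|
    (Equiv.subRight k).summable_iff.2 (memℓp_two_iff_summable_sq.1 hf)

theorem l2norm_comp_sub (f : ℤ → ℂ) (k : ℤ) : l2norm (fun m => f (m - k)) = l2norm f := by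
  rw [l2norm, l2norm, ← (Equiv.subRight k).tsum_eq fun m => ‖f m‖ ^ 2]
  rfl

variable {f : ℤ → ℂ}

theorem coe_sum_smul_translate (hf : Memℓp f 2) (s : Finset ℤ) (a : ℤ → ℂ) :
    ⇑(∑ k ∈ s, a k • (⟨_, hf.comp_sub k⟩ : ℓ²)) = fun m => ∑ k ∈ s, a k * f (m - k) := by
  ext m
  rw [lp.coeFn_sum, Finset.sum_apply]
  rfl

theorem Memℓp.sum_translate (hf : Memℓp f 2) (s : Finset ℤ) (a : ℤ → ℂ) :
    Memℓp (fun m => ∑ k ∈ s, a k * f (m - k)) 2 :=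
  coe_sum_smul_translate hf s a ▸ (∑ k ∈ s, a k • (⟨_, hf.comp_sub k⟩ : ℓ²)).2

theorem l2norm_sum_translate_le (hf : Memℓp f 2) (s : Finset ℤ) (a : ℤ → ℂ) :
    l2norm (fun m => ∑ k ∈ s, a k * f (m - k)) ≤ (∑ k ∈ s, ‖a k‖) * l2norm f := by
  rw [← coe_sum_smul_translate hf, l2norm_coe, sum_mul]
  refine (norm_sum_le _ _).trans (sum_le_sum fun k _ => ?_)
  rw [norm_smul, ← l2norm_coe, l2norm_comp_sub]

end Translate

section UpperBound

variable {n : ℕ} {u : ℤ → ℝ}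

theorem conv_eq_sum (hsupp : ∀ k : ℤ, (n : ℤ) < |k| → u k = 0) (f : ℤ → ℂ) :
    conv u f = fun m => ∑ k ∈ Icc (-(n : ℤ)) n, (u k : ℂ) * f (m - k) := by
  ext m
  refine tsum_eq_sum fun k hk => ?_
  rw [hsupp k (by rw [mem_Icc, not_and_or] at hk; rw [lt_abs]; omega), ofReal_zero, zero_mul]

theorem Memℓp.conv (hsupp : ∀ k : ℤ, (n : ℤ) < |k| → u k = 0) {f : ℤ → ℂ} (hf : Memℓp f 2) :
    Memℓp (conv u f) 2 :=
  conv_eq_sum hsupp f ▸ hf.sum_translate _ _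

theorem dlap_eq_sum (g : ℤ → ℂ) :
    dlap g = fun m => ∑ k ∈ {-2, -1, 0}, (if k = -1 then -2 else 1 : ℂ) * g (m - k) := by
  ext m
  rw [sum_insert (by decide), sum_insert (by decide), sum_singleton]
  norm_num [dlap, sub_eq_add_neg, add_assoc]

theorem Memℓp.dlap {g : ℤ → ℂ} (hg : Memℓp g 2) : Memℓp (dlap g) 2 :=
  dlap_eq_sum g ▸ hg.sum_translate _ _

theorem l2norm_dlap_le {g : ℤ → ℂ} (hg : Memℓp g 2) : l2norm (dlap g) ≤ 4 * l2norm g := by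
  rw [dlap_eq_sum]
  refine (l2norm_sum_translate_le hg _ _).trans_eq ?_
  norm_num

theorem l2norm_dlap_conv_le (hsupp : ∀ k : ℤ, (n : ℤ) < |k| → u k = 0) {f : ℤ → ℂ}
    (hf : Memℓp f 2) :
    l2norm (dlap (conv u f)) ≤ 4 * (∑ k ∈ Icc (-(n : ℤ)) n, |u k|) * l2norm f := by
  rw [mul_assoc]
  refine (l2norm_dlap_le ?_).trans (mul_le_mul_of_nonneg_left ?_ (by norm_num))
  · exact hf.conv hsupp
  · simpa [conv_eq_sum hsupp] using l2norm_sum_translate_le hf (Icc (-(n : ℤ)) n) (fun k => u k)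

-- `sSup` of a set that is not bounded above is `0`, so the main theorem needs this bound.
theorem bddAbove_l2norm_dlap_conv_div (hsupp : ∀ k : ℤ, (n : ℤ) < |k| → u k = 0) :
    BddAbove {r : ℝ | ∃ f : ℤ → ℂ, Memℓp f 2 ∧ f ≠ 0 ∧
      r = l2norm (dlap (conv u f)) / l2norm f} := by
  refine ⟨4 * ∑ k ∈ Icc (-(n : ℤ)) n, |u k|, ?_⟩
  rintro r ⟨f, hf, hf0, rfl⟩
  have hpos : 0 < l2norm f := by
    rw [show f = ⇑(⟨f, hf⟩ : ℓ²) from rfl, l2norm_coe, norm_pos_iff]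
    exact fun h => hf0 (congrArg Subtype.val h)
  exact div_le_of_le_mul₀ hpos.le (by positivity) (l2norm_dlap_conv_le hsupp hf)

end UpperBound

section Quadrature

noncomputable def fourierSum (n : ℕ) (u : ℤ → ℝ) (ξ : ℝ) : ℂ :=
  ∑ k ∈ Icc (-(n : ℤ)) n, (u k : ℂ) * exp (-I * k * ξ)

noncomputable def gridPoint (N : ℕ) (a : ℝ) (j : ℕ) : ℝ := a + 2 * π * j / N

theorem sum_exp_gridPoint_eq_zero {N : ℕ} {t : ℤ} (ht : ¬ (N : ℤ) ∣ t) (a : ℝ) :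
    ∑ j ∈ range N, exp (I * t * gridPoint N a j) = 0 := by
  rcases Nat.eq_zero_or_pos N with rfl | hN
  · simp
  have hω := Complex.isPrimitiveRoot_exp N hN.ne'
  set ζ := exp (2 * π * I / N) ^ t
  have hterm (j : ℕ) : exp (I * t * gridPoint N a j) = exp (I * t * a) * ζ ^ j := by
    rw [← zpow_natCast, ← zpow_mul, ← exp_int_mul, ← exp_add, gridPoint]
    push_cast
    field_simp
  have hζ : ζ ≠ 1 := mt (hω.zpow_eq_one_iff_dvd t).1 ht
  have hζN : ζ ^ N = 1 := by
    rw [← zpow_natCast, ← zpow_mul, mul_comm t, zpow_mul, zpow_natCast, hω.pow_eq_one, one_zpow]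
  simp only [hterm, ← mul_sum, geom_sum_eq hζ, hζN, sub_self, zero_div, mul_zero]

theorem sum_fourierSum_gridPoint {n N : ℕ} (hnN : n < N) (u : ℤ → ℝ) (a : ℝ) :
    ∑ j ∈ range N, fourierSum n u (gridPoint N a j) = N * u 0 := by
  simp only [fourierSum]
  rw [sum_comm, sum_eq_single_of_mem 0 (by simp)]
  · simp
  intro k hk hk0
  have hdvd : ¬ (N : ℤ) ∣ -k := fun h =>
    hk0 (neg_eq_zero.1 (Int.eq_zero_of_abs_lt_dvd h (by rw [mem_Icc] at hk; rw [abs_lt]; omega)))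
  have hzero := sum_exp_gridPoint_eq_zero hdvd a
  simp only [Int.cast_neg, mul_neg, neg_mul] at hzero ⊢
  rw [← mul_sum, hzero, mul_zero]

theorem exp_gridPoint_pow_eq_neg_one {N : ℕ} (hN : N ≠ 0) (j : ℕ) :
    exp (I * gridPoint N (π / N) j) ^ N = -1 := by
  have harg : (N : ℂ) * (I * gridPoint N (π / N) j) = (2 * j + 1 : ℕ) * (π * I) := by
    rw [gridPoint]
    push_cast
    field_simp
    ring
  rw [← exp_nat_mul, harg, exp_nat_mul, exp_pi_mul_I, Odd.neg_one_pow ⟨j, by ring⟩]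

theorem sum_exp_gridPoint_sub_eq_ite {N r s : ℕ} (hr : r < N) (hs : s < N) (a : ℝ) :
    ∑ j ∈ range N, exp (I * ((r - s : ℤ) : ℂ) * gridPoint N a j) = if r = s then (N : ℂ) else 0 := by
  split_ifs with h
  · simp [h]
  · refine sum_exp_gridPoint_eq_zero (fun hdvd => h ?_) a
    have := Int.eq_zero_of_abs_lt_dvd hdvd (by rw [abs_lt]; omega)
    omega

theorem sum_four_div_norm_exp_gridPoint_sub_one_sq (N : ℕ) :
    ∑ j ∈ range N, 4 / ‖exp (I * gridPoint N (π / N) j) - 1‖ ^ 2 = (N : ℝ) ^ 2 := by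
  set ζ := fun j => exp (I * gridPoint N (π / N) j)
  set w := fun j => ∑ r ∈ range N, ζ j ^ r
  have hw (j : ℕ) (hj : j ∈ range N) : 4 / ‖ζ j - 1‖ ^ 2 = ‖w j‖ ^ 2 := by
    have hnorm_mul : ‖w j‖ * ‖ζ j - 1‖ = 2 := by
      rw [← norm_mul, geom_sum_mul, exp_gridPoint_pow_eq_neg_one (Nat.ne_zero_of_lt (mem_range.1 hj)) j]
      norm_num
    have hne : ‖ζ j - 1‖ ≠ 0 := by
      intro h
      rw [h, mul_zero] at hnorm_mul
      norm_num at hnorm_mul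
    rw [div_eq_iff (pow_ne_zero 2 hne), ← mul_pow, hnorm_mul]
    norm_num
  have hprod (j r s : ℕ) :
      ζ j ^ r * conj (ζ j ^ s) = exp (I * ((r - s : ℤ) : ℂ) * gridPoint N (π / N) j) := by
    simp only [ζ, ← exp_conj, map_mul, conj_I, conj_ofReal, map_natCast, ← exp_nat_mul, ← exp_add]
    push_cast
    ring_nf
  have hsum : ∑ j ∈ range N, ((‖w j‖ ^ 2 : ℝ) : ℂ) = N ^ 2 := by
    simp only [ofReal_pow, ← mul_conj', w, map_sum, sum_mul_sum, hprod]
    rw [sum_comm]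
    calc _ = ∑ r ∈ range N, (N : ℂ) := sum_congr rfl fun r hr => ?_
      _ = N ^ 2 := by simp [sq]
    rw [sum_comm]
    refine (sum_congr rfl fun s hs => sum_exp_gridPoint_sub_eq_ite (mem_range.1 hr)
      (mem_range.1 hs) _).trans ?_
    simp [hr]
  rw [sum_congr rfl hw]
  exact_mod_cast hsum

end Quadrature

noncomputable def planeWave (ξ : ℝ) : ℤ → ℂ := fun k => exp (I * k * ξ)

noncomputable def truncatedWave (ξ : ℝ) (L : ℕ) : ℤ → ℂ :=
  Set.indicator (Ico 0 (L : ℤ) : Set ℤ) (planeWave ξ)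

section LowerBound

variable {n : ℕ} {u : ℤ → ℝ} (ξ : ℝ)

theorem norm_planeWave (k : ℤ) : ‖planeWave ξ k‖ = 1 := by
  simp [planeWave, norm_exp]

theorem conv_planeWave (hsupp : ∀ k : ℤ, (n : ℤ) < |k| → u k = 0) :
    conv u (planeWave ξ) = fourierSum n u ξ • planeWave ξ := by
  ext m
  rw [conv_eq_sum hsupp, Pi.smul_apply, smul_eq_mul, fourierSum, sum_mul]
  refine sum_congr rfl fun k _ => ?_
  rw [planeWave, planeWave, mul_assoc _ (exp _), ← exp_add]
  push_cast
  ring_nf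

theorem dlap_planeWave : dlap (planeWave ξ) = (exp (I * ξ) - 1) ^ 2 • planeWave ξ := by
  ext m
  simp only [dlap, planeWave, Pi.smul_apply, smul_eq_mul]
  have h1 : exp (I * ↑(m + 1) * ξ) = exp (I * m * ξ) * exp (I * ξ) := by
    rw [← exp_add]
    push_cast
    ring_nf
  have h2 : exp (I * ↑(m + 2) * ξ) = exp (I * m * ξ) * exp (I * ξ) * exp (I * ξ) := by
    rw [← exp_add, ← exp_add]
    push_cast
    ring_nf
  rw [h1, h2]
  ring

theorem dlap_smul (c : ℂ) (g : ℤ → ℂ) : dlap (c • g) = c • dlap g := by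
  ext m
  simp only [dlap, Pi.smul_apply, smul_eq_mul]
  ring

theorem conv_apply_congr (hsupp : ∀ k : ℤ, (n : ℤ) < |k| → u k = 0) {f g : ℤ → ℂ} {m : ℤ}
    (h : ∀ k ∈ Icc (-(n : ℤ)) n, f (m - k) = g (m - k)) : conv u f m = conv u g m := by
  simp only [conv_eq_sum hsupp]
  exact sum_congr rfl fun k hk => by rw [h k hk]

theorem norm_dlap_conv_truncatedWave (hsupp : ∀ k : ℤ, (n : ℤ) < |k| → u k = 0) {L : ℕ}
    {m : ℤ} (hm : n ≤ m) (hmL : m + n + 2 < L) :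
    ‖dlap (conv u (truncatedWave ξ L)) m‖ = ‖exp (I * ξ) - 1‖ ^ 2 * ‖fourierSum n u ξ‖ := by
  have hagree (j : ℤ) (hj₁ : n ≤ j) (hj₂ : j + n < L) :
      conv u (truncatedWave ξ L) j = conv u (planeWave ξ) j := by
    refine conv_apply_congr hsupp fun k hk => Set.indicator_of_mem ?_ _
    simp only [mem_Icc] at hk
    simp only [coe_Ico, Set.mem_Ico]
    omega
  have hlocal : dlap (conv u (truncatedWave ξ L)) m = dlap (conv u (planeWave ξ)) m := by
    simp only [dlap, hagree m hm (by omega), hagree (m + 1) (by omega) (by omega),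
      hagree (m + 2) (by omega) (by omega)]
  rw [hlocal, conv_planeWave ξ hsupp, dlap_smul, dlap_planeWave]
  simp [norm_planeWave, mul_comm]

theorem memℓp_truncatedWave (L : ℕ) : Memℓp (truncatedWave ξ L) 2 :=
  (memℓp_zero ((Ico 0 (L : ℤ)).finite_toSet.subset
    (Set.support_indicator_subset (f := planeWave ξ)))).of_exponent_ge bot_le

theorem l2norm_truncatedWave (L : ℕ) : l2norm (truncatedWave ξ L) = Real.sqrt L := by
  have hsq : (fun k => ‖truncatedWave ξ L k‖ ^ 2) = (Ico 0 (L : ℤ) : Set ℤ).indicator 1 := by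
    ext k
    simp only [truncatedWave, Set.indicator_apply]
    split_ifs <;> simp [norm_planeWave]
  rw [l2norm, hsq, ← sum_eq_tsum_indicator]
  simp

theorem truncatedWave_ne_zero {L : ℕ} (hL : L ≠ 0) : truncatedWave ξ L ≠ 0 := by
  intro h
  have h0 := congrFun h 0
  rw [truncatedWave, Set.indicator_of_mem (by simp only [coe_Ico, Set.mem_Ico]; omega)] at h0
  simpa [h0] using norm_planeWave ξ 0

theorem mul_sqrt_le_l2norm_dlap_conv_truncatedWave_div (hsupp : ∀ k : ℤ, (n : ℤ) < |k| → u k = 0)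
    (M : ℕ) :
    ‖exp (I * ξ) - 1‖ ^ 2 * ‖fourierSum n u ξ‖ * Real.sqrt (M / (M + (2 * n + 2))) ≤
      l2norm (dlap (conv u (truncatedWave ξ (M + 2 * n + 2)))) /
        l2norm (truncatedWave ξ (M + 2 * n + 2)) := by
  set c := ‖exp (I * ξ) - 1‖ ^ 2 * ‖fourierSum n u ξ‖
  set g := dlap (conv u (truncatedWave ξ (M + 2 * n + 2)))
  have hg : Memℓp g 2 := ((memℓp_truncatedWave ξ _).conv hsupp).dlap
  have hmiddle : ∀ m ∈ Ico (n : ℤ) (n + M), ‖g m‖ ^ 2 = c ^ 2 := fun m hm => by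
    rw [mem_Ico] at hm
    rw [norm_dlap_conv_truncatedWave ξ hsupp hm.1 (by push_cast; omega)]
  have hsum : M * c ^ 2 ≤ ∑' m, ‖g m‖ ^ 2 := by
    calc (M : ℝ) * c ^ 2 = ∑ m ∈ Ico (n : ℤ) (n + M), ‖g m‖ ^ 2 := by
          rw [sum_congr rfl hmiddle]
          simp
      _ ≤ ∑' m, ‖g m‖ ^ 2 :=
          (memℓp_two_iff_summable_sq.1 hg).sum_le_tsum _ fun _ _ => by positivity
  have hL : ((M + 2 * n + 2 : ℕ) : ℝ) = M + (2 * n + 2) := by push_cast; ring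
  calc c * Real.sqrt (M / (M + (2 * n + 2)))
      = Real.sqrt (M * c ^ 2 / (M + (2 * n + 2))) := by
        rw [mul_div_right_comm, Real.sqrt_mul' _ (by positivity), Real.sqrt_sq (by positivity),
          mul_comm]
    _ ≤ Real.sqrt ((∑' m, ‖g m‖ ^ 2) / (M + (2 * n + 2))) := by gcongr
    _ = l2norm g / l2norm (truncatedWave ξ (M + 2 * n + 2)) := by
        rw [l2norm_truncatedWave, hL, Real.sqrt_div' _ (by positivity), l2norm]

end LowerBound

theorem exists_four_div_sq_le_norm_exp_sub_one_sq_mul {n N : ℕ} (hnN : n < N) {u : ℤ → ℝ}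
    (hnorm : ∑ k ∈ Icc (-(n : ℤ)) n, u k = 1)
    (hnonneg : ∀ ξ : ℝ, ∃ r : ℝ, 0 ≤ r ∧ fourierSum n u ξ = r) :
    ∃ ξ : ℝ, 4 / (N : ℝ) ^ 2 ≤ ‖exp (I * ξ) - 1‖ ^ 2 * ‖fourierSum n u ξ‖ := by
  have hre (ξ : ℝ) : ‖fourierSum n u ξ‖ = (fourierSum n u ξ).re := by
    obtain ⟨r, hr, h⟩ := hnonneg ξ
    rw [h, norm_real, Real.norm_of_nonneg hr, ofReal_re]
  have hsum_re (a : ℝ) : ∑ j ∈ range N, (fourierSum n u (gridPoint N a j)).re = N * u 0 := by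
    rw [← re_sum, sum_fourierSum_gridPoint hnN]
    simp
  have hone : 1 ≤ ∑ j ∈ range N, ‖fourierSum n u (gridPoint N (π / N) j)‖ := by
    calc (1 : ℝ) = (fourierSum n u (gridPoint N 0 0)).re := by simp [gridPoint, fourierSum, hnorm]
      _ ≤ ∑ j ∈ range N, (fourierSum n u (gridPoint N 0 j)).re :=
          single_le_sum (fun j _ => hre _ ▸ norm_nonneg _) (mem_range.2 (by omega))
      _ = ∑ j ∈ range N, ‖fourierSum n u (gridPoint N (π / N) j)‖ := by simp only [hre, hsum_re]
  have hN : N ≠ 0 := by omega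
  obtain ⟨j, -, hle⟩ := exists_le_of_sum_le (nonempty_range_iff.2 hN)
    (f := fun j => 4 / ‖exp (I * gridPoint N (π / N) j) - 1‖ ^ 2 / N ^ 2)
    (g := fun j => ‖fourierSum n u (gridPoint N (π / N) j)‖)
    (by rwa [← sum_div, sum_four_div_norm_exp_gridPoint_sub_one_sq, div_self (by positivity)])
  refine ⟨gridPoint N (π / N) j, ?_⟩
  have hne : exp (I * gridPoint N (π / N) j) - 1 ≠ 0 := fun h => by
    have := exp_gridPoint_pow_eq_neg_one hN j
    rw [sub_eq_zero.1 h, one_pow] at this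
    norm_num at this
  have hpos : 0 < ‖exp (I * gridPoint N (π / N) j) - 1‖ ^ 2 := by positivity
  calc 4 / (N : ℝ) ^ 2
      = ‖exp (I * gridPoint N (π / N) j) - 1‖ ^ 2 *
          (4 / ‖exp (I * gridPoint N (π / N) j) - 1‖ ^ 2 / N ^ 2) := by
        field_simp
    _ ≤ _ := by gcongr

theorem smoothest_average_laplacian_lower_bound_general
    (n : ℕ) (u : ℤ → ℝ)
    (hsupp : ∀ k : ℤ, (n : ℤ) < |k| → u k = 0)
    (hnorm : ∑ k ∈ Finset.Icc (-(n : ℤ)) (n : ℤ), u k = 1)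
    (hFTpos : ∀ ξ : ℝ, ∃ r : ℝ, 0 ≤ r ∧
      ∑ k ∈ Finset.Icc (-(n : ℤ)) (n : ℤ),
        (u k : ℂ) * Complex.exp (-(Complex.I) * (k : ℂ) * (ξ : ℂ)) = (r : ℂ)) :
    (4 : ℝ) / ((n : ℝ) + 1) ^ 2 ≤
      sSup {r : ℝ | ∃ f : ℤ → ℂ, Memℓp f 2 ∧ f ≠ 0 ∧
        r = l2norm (dlap (conv u f)) / l2norm f} := by
  obtain ⟨ξ, hξ⟩ := exists_four_div_sq_le_norm_exp_sub_one_sq_mul n.lt_succ_self hnorm hFTpos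
  have hlim : Tendsto (fun M : ℕ => ‖exp (I * ξ) - 1‖ ^ 2 * ‖fourierSum n u ξ‖ *
      Real.sqrt (M / (M + (2 * n + 2)))) atTop
      (𝓝 (‖exp (I * ξ) - 1‖ ^ 2 * ‖fourierSum n u ξ‖)) := by
    simpa using tendsto_const_nhds.mul (tendsto_natCast_div_add_atTop ((2 : ℝ) * n + 2)).sqrt
  refine (by exact_mod_cast hξ : _ ≤ _).trans (le_of_tendsto' hlim fun M => ?_)
  exact (mul_sqrt_le_l2norm_dlap_conv_truncatedWave_div ξ hsupp M).trans
    (le_csSup (bddAbove_l2norm_dlap_conv_div hsupp)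
      ⟨_, memℓp_truncatedWave ξ _, truncatedWave_ne_zero ξ (by omega), rfl⟩)

theorem smoothest_average_laplacian_lower_bound
    (n : ℕ) (hn : 1 ≤ n) (u : ℤ → ℝ)
    (hsupp : ∀ k : ℤ, (n : ℤ) < |k| → u k = 0)
    (hsymm : ∀ k : ℤ, u (-k) = u k)
    (hnorm : ∑ k ∈ Finset.Icc (-(n : ℤ)) (n : ℤ), u k = 1)
    (hFTpos : ∀ ξ : ℝ, ∃ r : ℝ, 0 ≤ r ∧
      ∑ k ∈ Finset.Icc (-(n : ℤ)) (n : ℤ),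
        (u k : ℂ) * Complex.exp (-(Complex.I) * (k : ℂ) * (ξ : ℂ)) = (r : ℂ)) :
    (4 : ℝ) / ((n : ℝ) + 1) ^ 2 ≤
      sSup {r : ℝ | ∃ f : ℤ → ℂ, Memℓp f 2 ∧ f ≠ 0 ∧
        r = l2norm (dlap (conv u f)) / l2norm f} :=
  smoothest_average_laplacian_lower_bound_general n u hsupp hnorm hFTpos
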